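/- arXiv:2305.05387 — 2 statements merged into one kernel-verified Lean document; each statement's English description precedes it below -/
import Mathlib

section
/- Let M and S be G-graded A-modules and f : M → S a surjective graded A-homomorphism. If K is a graded classical weakly prime A-submodule of M with Ker(f) ⊆ K, then f(K) is a graded classical weakly prime A-submodule of S. -/
section GCWP

variable {G : Type*} [AddGroup G] [DecidableEq G]
variable {A : Type*} [Ring A] {M : Type*} [AddCommGroup M] [Module A M]

/-- A submodule is graded (homogeneous) if it is generated by its homogeneous elements. -/
def IsGrSub (ℳ : G → AddSubgroup M) (K : Submodule A M) : Prop :=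
  K ≤ Submodule.span A ((K : Set M) ∩ {m | SetLike.IsHomogeneousElem ℳ m})

/-- `K` is a graded classical weakly prime submodule. -/
def IsGCWP (𝒜 : G → AddSubgroup A) (ℳ : G → AddSubgroup M) (K : Submodule A M) : Prop :=
  K ≠ ⊤ ∧ IsGrSub ℳ K ∧
  ∀ x y : A, SetLike.IsHomogeneousElem 𝒜 x → SetLike.IsHomogeneousElem 𝒜 y →
    ∀ L : Submodule A M, IsGrSub ℳ L →
      (∃ a : A, ∃ l ∈ L, (x * a * y) • l ≠ 0) →
      (∀ a : A, ∀ l ∈ L, (x * a * y) • l ∈ K) →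
      (∀ l ∈ L, x • l ∈ K) ∨ (∀ l ∈ L, y • l ∈ K)

/-- `K` is a graded classical prime submodule. -/
def IsGCP (𝒜 : G → AddSubgroup A) (ℳ : G → AddSubgroup M) (K : Submodule A M) : Prop :=
  K ≠ ⊤ ∧ IsGrSub ℳ K ∧
  ∀ x y : A, SetLike.IsHomogeneousElem 𝒜 x → SetLike.IsHomogeneousElem 𝒜 y →
    ∀ L : Submodule A M, IsGrSub ℳ L →
      (∀ a : A, ∀ l ∈ L, (x * a * y) • l ∈ K) →
      (∀ l ∈ L, x • l ∈ K) ∨ (∀ l ∈ L, y • l ∈ K)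

/-- `(x, y, L)` is a graded classical triple zero of `K`. -/
def TripleZero (K : Submodule A M) (x y : A) (L : Submodule A M) : Prop :=
  (∀ a : A, ∀ l ∈ L, (x * a * y) • l = 0) ∧
    ¬ (∀ l ∈ L, x • l ∈ K) ∧ ¬ (∀ l ∈ L, y • l ∈ K)

/-- `L` is an `A_e`-submodule of `M_g` (as an additive subgroup of `M`). -/
def IsAeSub (𝒜 : G → AddSubgroup A) (ℳ : G → AddSubgroup M) (g : G) (L : AddSubgroup M) : Prop :=
  (L : Set M) ⊆ (ℳ g : Set M) ∧ ∀ a ∈ 𝒜 0, ∀ l ∈ L, a • l ∈ L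

/-- `L` is a faithful `A_e`-module. -/
def AeFaithful (𝒜 : G → AddSubgroup A) (L : AddSubgroup M) : Prop :=
  ∀ a ∈ 𝒜 0, (∀ l ∈ L, a • l = 0) → a = 0

/-- `I` is an ideal of `A_e` (as an additive subgroup of `A`). -/
def IsAeIdeal (𝒜 : G → AddSubgroup A) (I : AddSubgroup A) : Prop :=
  (I : Set A) ⊆ (𝒜 0 : Set A) ∧ ∀ a ∈ 𝒜 0, ∀ r ∈ I, a * r ∈ I ∧ r * a ∈ I

/-- `K` is a `g`-classical weakly prime submodule of `M`. -/
def IsgCWP (𝒜 : G → AddSubgroup A) (ℳ : G → AddSubgroup M) (g : G) (K : Submodule A M) :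
    Prop :=
  IsGrSub ℳ K ∧ ¬ ((ℳ g : Set M) ⊆ (K : Set M)) ∧
  ∀ x ∈ 𝒜 0, ∀ y ∈ 𝒜 0, ∀ L : AddSubgroup M, IsAeSub 𝒜 ℳ g L →
    (∃ a ∈ 𝒜 0, ∃ l ∈ L, (x * a * y) • l ≠ 0) →
    (∀ a ∈ 𝒜 0, ∀ l ∈ L, (x * a * y) • l ∈ K) →
    (∀ l ∈ L, x • l ∈ K) ∨ (∀ l ∈ L, y • l ∈ K)

/-- `P` is a weakly prime (proper) left ideal of `A_e`, given as a subset of `A`. -/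
def IsWeaklyPrimeAe (𝒜 : G → AddSubgroup A) (P : Set A) : Prop :=
  P ⊆ (𝒜 0 : Set A) ∧ ¬ ((𝒜 0 : Set A) ⊆ P) ∧
  (0 : A) ∈ P ∧ (∀ p ∈ P, ∀ q ∈ P, p + q ∈ P) ∧ (∀ p ∈ P, -p ∈ P) ∧
  (∀ a ∈ 𝒜 0, ∀ p ∈ P, a * p ∈ P) ∧
  ∀ I J : AddSubgroup A, IsAeIdeal 𝒜 I → IsAeIdeal 𝒜 J →
    (∃ i ∈ I, ∃ j ∈ J, i * j ≠ 0) → (∀ i ∈ I, ∀ j ∈ J, i * j ∈ P) →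
    (I : Set A) ⊆ P ∨ (J : Set A) ⊆ P

end GCWP

section GW2A
variable {G : Type*} [AddGroup G] [DecidableEq G]
variable {A : Type*} [Ring A] {M : Type*} [AddCommGroup M] [Module A M]

/-- `K` is a graded weakly 2-absorbing submodule. -/
def IsGW2A (𝒜 : G → AddSubgroup A) (ℳ : G → AddSubgroup M) (K : Submodule A M) : Prop :=
  K ≠ ⊤ ∧ IsGrSub ℳ K ∧
  ∀ x y : A, SetLike.IsHomogeneousElem 𝒜 x → SetLike.IsHomogeneousElem 𝒜 y →
    ∀ L : Submodule A M, IsGrSub ℳ L →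
      (∃ a : A, ∃ l ∈ L, (x * a * y) • l ≠ 0) →
      (∀ a : A, ∀ l ∈ L, (x * a * y) • l ∈ K) →
      (∀ l ∈ L, x • l ∈ K) ∨ (∀ l ∈ L, y • l ∈ K) ∨
        (∀ a : A, ∀ m : M, (x * a * y) • m ∈ K)

end GW2A

/-!
A graded submodule, i.e. one generated by homogeneous elements, is the same as a submodule closed
under taking homogeneous components, and a graded homomorphism commutes with taking components.
Hence, for `f` surjective with `ker f ≤ K`, the graded submodules `L` of `S` correspond to the
graded submodules `f⁻¹(L)` of `M`, and `f⁻¹(f(K)) = K`; so the defining condition for `f(K)` and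
`L` is the defining condition for `K` and `f⁻¹(L)`.
-/

section Homogeneous

open DirectSum

variable {ιA ιM σA σM A M : Type*} [DecidableEq ιA] [DecidableEq ιM] [VAdd ιA ιM]
variable [Semiring A] [AddCommMonoid M] [Module A M]
variable [SetLike σA A] [AddSubmonoidClass σA A] [SetLike σM M] [AddSubmonoidClass σM M]
variable (ℳ : ιM → σM) [Decomposition ℳ]

theorem Submodule.decompose_mem_of_mem {p : Submodule A M} {n : M} {i : ιM}
    (hni : n ∈ ℳ i) (hnp : n ∈ p) (j : ιM) : (decompose ℳ n j : M) ∈ p := by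
  by_cases hij : i = j
  · subst hij
    rwa [decompose_of_mem_same ℳ hni]
  · rw [decompose_of_mem_ne ℳ hni hij]
    exact p.zero_mem

theorem Submodule.decompose_smul_mem_of_mem (𝒜 : ιA → σA) [Decomposition 𝒜]
    [SetLike.GradedSMul 𝒜 ℳ] {p : Submodule A M} {n : M} {i : ιM} (hni : n ∈ ℳ i) (hnp : n ∈ p)
    (a : A) (j : ιM) : (decompose ℳ (a • n) j : M) ∈ p := by
  induction a using Decomposition.inductionOn 𝒜 with
  | zero => simp
  | homogeneous b =>
    exact decompose_mem_of_mem ℳ (SetLike.GradedSMul.smul_mem b.2 hni) (p.smul_mem _ hnp) j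
  | add a b ha hb =>
    rw [add_smul, decompose_add, DirectSum.add_apply, AddMemClass.coe_add]
    exact p.add_mem ha hb

theorem Submodule.isHomogeneous_span (𝒜 : ιA → σA) [Decomposition 𝒜] [SetLike.GradedSMul 𝒜 ℳ]
    {s : Set M} (hs : ∀ x ∈ s, SetLike.IsHomogeneousElem ℳ x) : (span A s).IsHomogeneous ℳ := by
  classical
  intro j m hm
  induction hm using Submodule.span_induction generalizing j with
  | mem x hx =>
    obtain ⟨i, hxi⟩ := hs x hx
    exact decompose_mem_of_mem ℳ hxi (subset_span hx) j
  | zero => simp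
  | add x y _ _ hx hy =>
    rw [decompose_add, DirectSum.add_apply, AddMemClass.coe_add]
    exact add_mem (hx j) (hy j)
  | smul a x _ hx =>
    rw [← sum_support_decompose ℳ x, Finset.smul_sum, decompose_sum, DFinsupp.finsetSum_apply,
      AddSubmonoidClass.coe_finsetSum]
    exact sum_mem fun i _ => decompose_smul_mem_of_mem ℳ 𝒜 (decompose ℳ x i).2 (hx i) a j

theorem map_directSumDecompose_of_forall_mem {ι M S σM σS F : Type*} [DecidableEq ι]
    [AddCommMonoid M] [AddCommMonoid S] [SetLike σM M] [AddSubmonoidClass σM M]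
    [SetLike σS S] [AddSubmonoidClass σS S] (ℳ : ι → σM) (𝒮 : ι → σS)
    [Decomposition ℳ] [Decomposition 𝒮] [FunLike F M S] [AddMonoidHomClass F M S] (f : F)
    (hf : ∀ i, ∀ m ∈ ℳ i, f m ∈ 𝒮 i) (m : M) (j : ι) :
    f (decompose ℳ m j) = decompose 𝒮 (f m) j := by
  induction m using Decomposition.inductionOn ℳ with
  | zero => simp
  | @homogeneous i m =>
    by_cases hij : i = j
    · subst hij
      rw [decompose_coe, of_eq_same, decompose_of_mem_same 𝒮 (hf _ _ m.2)]
    · rw [decompose_coe, of_eq_of_ne _ _ _ (Ne.symm hij), decompose_of_mem_ne 𝒮 (hf _ _ m.2) hij]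
      simp
  | add m m' hm hm' =>
    rw [decompose_add, map_add, decompose_add, DirectSum.add_apply, DirectSum.add_apply,
      AddMemClass.coe_add, AddMemClass.coe_add, map_add, hm, hm']

end Homogeneous

section GradedSubmodule

open DirectSum

variable {G : Type*} {A : Type*} [Ring A] {M : Type*} [AddCommGroup M] [Module A M]
variable {S : Type*} [AddCommGroup S] [Module A S]

theorem isGrSub_iff_isHomogeneous [Add G] [DecidableEq G] (𝒜 : G → AddSubgroup A)
    (ℳ : G → AddSubgroup M) [SetLike.GradedSMul 𝒜 ℳ] [Decomposition 𝒜] [Decomposition ℳ]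
    (L : Submodule A M) :
    IsGrSub ℳ L ↔ L.IsHomogeneous ℳ := by
  classical
  constructor
  · intro hL
    have hspan : Submodule.span A ((L : Set M) ∩ {m | SetLike.IsHomogeneousElem ℳ m}) = L :=
      le_antisymm (Submodule.span_le.2 Set.inter_subset_left) hL
    rw [← hspan]
    exact Submodule.isHomogeneous_span ℳ 𝒜 fun _ hx => hx.2
  · intro hL m hm
    rw [← sum_support_decompose ℳ m]
    exact sum_mem fun i _ => Submodule.subset_span ⟨hL i hm, i, (decompose ℳ m i).2⟩

theorem IsGrSub.map {ℳ : G → AddSubgroup M} {𝒮 : G → AddSubgroup S} {K : Submodule A M}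
    (hK : IsGrSub ℳ K) (f : M →ₗ[A] S) (hf : ∀ g, ∀ m ∈ ℳ g, f m ∈ 𝒮 g) :
    IsGrSub 𝒮 (K.map f) := by
  refine (Submodule.map_mono hK).trans ?_
  rw [Submodule.map_span]
  refine Submodule.span_mono ?_
  rintro _ ⟨m, ⟨hmK, g, hmg⟩, rfl⟩
  exact ⟨Submodule.mem_map_of_mem hmK, g, hf g m hmg⟩

theorem IsGrSub.comap [Add G] [DecidableEq G] (𝒜 : G → AddSubgroup A) {ℳ : G → AddSubgroup M}
    {𝒮 : G → AddSubgroup S} [SetLike.GradedSMul 𝒜 ℳ] [SetLike.GradedSMul 𝒜 𝒮] [Decomposition 𝒜]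
    [Decomposition ℳ] [Decomposition 𝒮] {L : Submodule A S} (hL : IsGrSub 𝒮 L) (f : M →ₗ[A] S)
    (hf : ∀ g, ∀ m ∈ ℳ g, f m ∈ 𝒮 g) :
    IsGrSub ℳ (L.comap f) := by
  rw [isGrSub_iff_isHomogeneous 𝒜] at hL ⊢
  intro g m hm
  rw [Submodule.mem_comap, map_directSumDecompose_of_forall_mem ℳ 𝒮 f hf]
  exact hL g hm

theorem Submodule.forall_smul_mem_map_of_comap {f : M →ₗ[A] S} (hf : Function.Surjective f)
    {K : Submodule A M} {L : Submodule A S} {x : A} (h : ∀ m ∈ L.comap f, x • m ∈ K) :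
    ∀ l ∈ L, x • l ∈ K.map f := by
  intro l hl
  obtain ⟨m, rfl⟩ := hf l
  rw [← map_smul]
  exact mem_map_of_mem (h m hl)

end GradedSubmodule

section Theorems

variable {G : Type*} [AddGroup G] [DecidableEq G]
variable {A : Type*} [Ring A] {M : Type*} [AddCommGroup M] [Module A M]
variable (𝒜 : G → AddSubgroup A) (ℳ : G → AddSubgroup M)
variable [SetLike.GradedMonoid 𝒜] [SetLike.GradedSMul 𝒜 ℳ]
variable [DirectSum.Decomposition 𝒜] [DirectSum.Decomposition ℳ]

set_option linter.unusedSectionVars false in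
theorem stmt5 {S : Type*} [AddCommGroup S] [Module A S] (𝒮 : G → AddSubgroup S)
    [SetLike.GradedSMul 𝒜 𝒮] [DirectSum.Decomposition 𝒮]
    (f : M →ₗ[A] S) (hf : Function.Surjective f)
    (hgr : ∀ g : G, ∀ m ∈ ℳ g, f m ∈ 𝒮 g)
    (K : Submodule A M) (hK : IsGCWP 𝒜 ℳ K)
    (hker : LinearMap.ker f ≤ K) :
    IsGCWP 𝒜 𝒮 (K.map f) := by
  obtain ⟨hKtop, hKgr, hKprime⟩ := hK
  have hcomap : (K.map f).comap f = K := Submodule.comap_map_eq_self hker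
  refine ⟨fun htop => hKtop (by rw [← hcomap, htop, Submodule.comap_top]),
    hKgr.map f hgr, fun x y hx hy L hL hne hcon => ?_⟩
  have hne' : ∃ a : A, ∃ m ∈ L.comap f, (x * a * y) • m ≠ 0 := by
    obtain ⟨a, l, hl, hl0⟩ := hne
    obtain ⟨m, rfl⟩ := hf l
    exact ⟨a, m, hl, fun h0 => hl0 (by rw [← map_smul, h0, map_zero])⟩
  have hcon' : ∀ a : A, ∀ m ∈ L.comap f, (x * a * y) • m ∈ K := fun a m hm => by
    rw [← hcomap, Submodule.mem_comap, map_smul]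
    exact hcon a (f m) hm
  exact (hKprime x y hx hy _ (hL.comap 𝒜 f hgr) hne' hcon').imp
    (Submodule.forall_smul_mem_map_of_comap hf) (Submodule.forall_smul_mem_map_of_comap hf)

end Theorems
end

section
/- Let M be a graded A-module, K a graded classical weakly prime A-submodule of M, and (x, y, L) a graded classical triple zero of K with x, y ∈ A_g for some g ∈ G. Then (K :_{A_g} M)² L = 0 and (K :_{A_g} M)² K = 0. -/
/-! For `r, s ∈ (K :_{A_g} M)` the elements `x + r, y + s` are again homogeneous of degree `g`,
`(x + r) A (y + s) (L + K) ⊆ K`, and neither `(x + r) L` nor `(y + s) L` lies in `K`; so weak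
primeness forces `(x + r) A (y + s) (L + K) = 0`. Inclusion–exclusion over `r ∈ {0, r}`,
`s ∈ {0, s}` then gives `r A s (L + K) = 0`. -/

section TripleZero

variable {G : Type*}
variable {A : Type*} [Ring A] {M : Type*} [AddCommGroup M] [Module A M]
variable {𝒜 : G → AddSubgroup A} {ℳ : G → AddSubgroup M}

theorem IsGrSub.sup {L N : Submodule A M} (hL : IsGrSub ℳ L) (hN : IsGrSub ℳ N) :
    IsGrSub ℳ (L ⊔ N) :=
  sup_le
    (hL.trans <| Submodule.span_mono <| Set.inter_subset_inter_left _ <|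
      SetLike.coe_subset_coe.mpr le_sup_left)
    (hN.trans <| Submodule.span_mono <| Set.inter_subset_inter_left _ <|
      SetLike.coe_subset_coe.mpr le_sup_right)

theorem forall_add_smul_mem_iff {K L : Submodule A M} {x r : A} (hr : ∀ m : M, r • m ∈ K) :
    (∀ l ∈ L, (x + r) • l ∈ K) ↔ ∀ l ∈ L, x • l ∈ K := by
  simp only [add_smul, K.add_mem_iff_left (hr _)]

variable {K L : Submodule A M} {x y r s : A} {g : G}

theorem IsGCWP.add_mul_add_smul_eq_zero (hK : IsGCWP 𝒜 ℳ K) (hx : x ∈ 𝒜 g) (hy : y ∈ 𝒜 g)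
    (hL : IsGrSub ℳ L) (hxy : ∀ a : A, ∀ l ∈ L, (x * a * y) • l ∈ K)
    (hnx : ¬ ∀ l ∈ L, x • l ∈ K) (hny : ¬ ∀ l ∈ L, y • l ∈ K)
    (hr : r ∈ 𝒜 g) (hrK : ∀ m : M, r • m ∈ K) (hs : s ∈ 𝒜 g) (hsK : ∀ m : M, s • m ∈ K) :
    ∀ a : A, ∀ l ∈ L, ((x + r) * a * (y + s)) • l = 0 := by
  by_contra! hne
  have hmem : ∀ a : A, ∀ l ∈ L, ((x + r) * a * (y + s)) • l ∈ K := by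
    intro a l hl
    have e : (x + r) * a * (y + s) = x * a * y + (x * a) * s + r * (a * (y + s)) := by
      noncomm_ring
    rw [e, add_smul, add_smul, mul_smul (x * a) s, mul_smul r]
    exact add_mem (add_mem (hxy a l hl) (K.smul_mem _ (hsK l))) (hrK _)
  rcases hK.2.2 (x + r) (y + s) ⟨g, add_mem hx hr⟩ ⟨g, add_mem hy hs⟩ L hL hne hmem with h | h
  · exact hnx ((forall_add_smul_mem_iff hrK).mp h)
  · exact hny ((forall_add_smul_mem_iff hsK).mp h)

theorem IsGCWP.mul_mul_smul_eq_zero (hK : IsGCWP 𝒜 ℳ K) (hx : x ∈ 𝒜 g) (hy : y ∈ 𝒜 g)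
    (hL : IsGrSub ℳ L) (hxy : ∀ a : A, ∀ l ∈ L, (x * a * y) • l ∈ K)
    (hnx : ¬ ∀ l ∈ L, x • l ∈ K) (hny : ¬ ∀ l ∈ L, y • l ∈ K)
    (hr : r ∈ 𝒜 g) (hrK : ∀ m : M, r • m ∈ K) (hs : s ∈ 𝒜 g) (hsK : ∀ m : M, s • m ∈ K) :
    ∀ a : A, ∀ l ∈ L, (r * a * s) • l = 0 := by
  intro a l hl
  have h0K : ∀ m : M, (0 : A) • m ∈ K := fun m => (zero_smul A m).symm ▸ K.zero_mem
  have hvanish := fun {r' s' : A} (hr' : r' ∈ 𝒜 g) (hrK' : ∀ m : M, r' • m ∈ K)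
      (hs' : s' ∈ 𝒜 g) (hsK' : ∀ m : M, s' • m ∈ K) =>
    hK.add_mul_add_smul_eq_zero hx hy hL hxy hnx hny hr' hrK' hs' hsK' a l hl
  have e : r * a * s = (x + r) * a * (y + s) - (x + r) * a * (y + 0)
      - (x + 0) * a * (y + s) + (x + 0) * a * (y + 0) := by
    noncomm_ring
  rw [e, add_smul, sub_smul, sub_smul, hvanish hr hrK hs hsK, hvanish hr hrK (zero_mem _) h0K,
    hvanish (zero_mem _) h0K hs hsK, hvanish (zero_mem _) h0K (zero_mem _) h0K]
  simp

end TripleZero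

section Theorems

variable {G : Type*} [AddGroup G] [DecidableEq G]
variable {A : Type*} [Ring A] {M : Type*} [AddCommGroup M] [Module A M]
variable (𝒜 : G → AddSubgroup A) (ℳ : G → AddSubgroup M)
variable [SetLike.GradedMonoid 𝒜] [SetLike.GradedSMul 𝒜 ℳ]
variable [DirectSum.Decomposition 𝒜] [DirectSum.Decomposition ℳ]

theorem stmt13 (K : Submodule A M) (hK : IsGCWP 𝒜 ℳ K)
    (x y : A) (g : G) (hx : x ∈ 𝒜 g) (hy : y ∈ 𝒜 g)
    (L : Submodule A M) (hL : IsGrSub ℳ L) (htz : TripleZero K x y L) :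
    ∀ r ∈ 𝒜 g, (∀ m : M, r • m ∈ K) → ∀ s ∈ 𝒜 g, (∀ m : M, s • m ∈ K) →
      (∀ l ∈ L, (r * s) • l = 0) ∧ (∀ k ∈ K, (r * s) • k = 0) := by
  intro r hr hrK s hs hsK
  obtain ⟨h0, hnx, hny⟩ := htz
  have hxy : ∀ a : A, ∀ m ∈ L ⊔ K, (x * a * y) • m ∈ K := by
    intro a m hm
    obtain ⟨l, hl, k, hk, rfl⟩ := Submodule.mem_sup.mp hm
    rw [smul_add, h0 a l hl, zero_add]
    exact K.smul_mem _ hk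
  have hrs := hK.mul_mul_smul_eq_zero hx hy (hL.sup hK.2.1) hxy
    (fun h => hnx fun l hl => h l (Submodule.mem_sup_left hl))
    (fun h => hny fun l hl => h l (Submodule.mem_sup_left hl)) hr hrK hs hsK 1
  simp only [mul_one] at hrs
  exact ⟨fun l hl => hrs l (Submodule.mem_sup_left hl),
    fun k hk => hrs k (Submodule.mem_sup_right hk)⟩

end Theorems
end
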